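/- Let π be a probability measure on ℝ^d × ℝ^d such that the coordinate functions (x, y) ↦ x and (x, y) ↦ y are square-integrable with respect to π. Let μ = ∫ x dπ(x,y) and μ̃ = ∫ y dπ(x,y), and let Σ and Σ̃ be the covariance matrices of the two marginals, with entries Σ_{ij} = ∫ (x_i − μ_i)(x_j − μ_j) dπ and Σ̃_{ij} = ∫ (y_i − μ̃_i)(y_j − μ̃_j) dπ. Then ∫ ‖x − y‖² dπ(x,y) ≥ ‖μ − μ̃‖² + tr(Σ) + tr(Σ̃) − 2·tr((Σ̃^{1/2}·Σ·Σ̃^{1/2})^{1/2}), where ‖·‖ is the Euclidean norm on ℝ^d. -/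

import Mathlib

open MeasureTheory Matrix
open scoped Classical

/-- The unique positive semidefinite square root of a positive semidefinite real matrix
(junk value `0` if the matrix is not positive semidefinite). -/
noncomputable def psdSqrt {d : ℕ} (A : Matrix (Fin d) (Fin d) ℝ) : Matrix (Fin d) (Fin d) ℝ :=
  if h : A.PosSemidef then
    (h.1.eigenvectorUnitary : Matrix (Fin d) (Fin d) ℝ) * diagonal (Real.sqrt ∘ h.1.eigenvalues) *
      (star h.1.eigenvectorUnitary : Matrix (Fin d) (Fin d) ℝ) else 0

/-!
Centre both coordinates: `X = x - μ`, `Y = y - μ̃`. Expanding the square gives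
`∫ ‖x - y‖² = ‖μ - μ̃‖² + tr Σ + tr Σ̃ - 2 ∫ ⟪X, Y⟫`, so it suffices to bound the cross term.
For every positive definite `K`, pointwise `2 ⟪X, Y⟫ ≤ Xᵀ K X + Yᵀ K⁻¹ Y`, and integrating gives
`2 ∫ ⟪X, Y⟫ ≤ tr (K Σ) + tr (K⁻¹ Σ̃)`. When `Σ, Σ̃` are positive definite, the choice
`K = R M⁻¹ R` with `R = Σ̃^{1/2}`, `M = (R Σ R)^{1/2}` makes both traces equal to `tr M`.
In general, apply this to `Σ + t I, Σ̃ + t I` and let `t → 0⁺`, using the continuity of the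
matrix square root.
-/

open Set Filter
open scoped MatrixOrder Matrix.Norms.L2Operator RealInnerProductSpace

namespace Matrix

variable {ι : Type*} [Fintype ι]

theorem dotProduct_mulVec_eq_sum {R : Type*} [CommSemiring R] (x y : ι → R)
    (K : Matrix ι ι R) : x ⬝ᵥ K *ᵥ y = ∑ i, ∑ j, K i j * (y j * x i) := by
  simp only [dotProduct, mulVec, Finset.mul_sum]
  exact Finset.sum_congr rfl fun i _ => Finset.sum_congr rfl fun j _ => by ring

theorem IsHermitian.dotProduct_mulVec_comm {K : Matrix ι ι ℝ} (hK : K.IsHermitian)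
    (x y : ι → ℝ) : x ⬝ᵥ K *ᵥ y = y ⬝ᵥ K *ᵥ x := by
  rw [dotProduct_mulVec, ← mulVec_transpose, dotProduct_comm,
    ← conjTranspose_eq_transpose_of_trivial, hK.eq]

variable [DecidableEq ι]

theorem PosDef.two_mul_dotProduct_le {K : Matrix ι ι ℝ} (hK : K.PosDef) (x y : ι → ℝ) :
    2 * (x ⬝ᵥ y) ≤ x ⬝ᵥ K *ᵥ x + y ⬝ᵥ K⁻¹ *ᵥ y := by
  set z := K⁻¹ *ᵥ y
  have hKz : K *ᵥ z = y := by
    rw [mulVec_mulVec, mul_nonsing_inv _ ((isUnit_iff_isUnit_det K).mp hK.isUnit), one_mulVec]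
  have := hK.posSemidef.dotProduct_mulVec_nonneg (x - z)
  rw [star_trivial, mulVec_sub, dotProduct_sub, sub_dotProduct, sub_dotProduct,
    hK.1.dotProduct_mulVec_comm z x, hKz, dotProduct_comm z y] at this
  linarith

theorem PosDef.exists_trace_mul_add_trace_inv_mul_eq {A B : Matrix ι ι ℝ} (hA : A.PosDef)
    (hB : B.PosDef) : ∃ K : Matrix ι ι ℝ, K.PosDef ∧
      (K * A).trace + (K⁻¹ * B).trace = 2 * (CFC.sqrt (CFC.sqrt B * A * CFC.sqrt B)).trace := by
  set R := CFC.sqrt B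
  have hR : IsStrictlyPositive R := hB.isStrictlyPositive.sqrt
  have hP : IsStrictlyPositive (R * A * R) :=
    .conjugate_of_isUnit_of_isSelfAdjoint _ _ hR.isUnit hR.isSelfAdjoint hA.isStrictlyPositive
  set M := CFC.sqrt (R * A * R)
  have hM : M.PosDef := isStrictlyPositive_iff_posDef.mp hP.sqrt
  have hRu : IsUnit R.det := (isUnit_iff_isUnit_det R).mp hR.isUnit
  have hMu : IsUnit M.det := (isUnit_iff_isUnit_det M).mp hM.isUnit
  refine ⟨R * M⁻¹ * R, isStrictlyPositive_iff_posDef.mp <|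
    .conjugate_of_isUnit_of_isSelfAdjoint _ _ hR.isUnit hR.isSelfAdjoint hM.inv.isStrictlyPositive,
    ?_⟩
  have hKA : (R * M⁻¹ * R * A).trace = M.trace := by
    rw [mul_assoc _ R A, trace_mul_comm, ← mul_assoc,
      ← CFC.sqrt_mul_sqrt_self (R * A * R) hP.nonneg, mul_nonsing_inv_cancel_right _ _ hMu]
  have hKB : ((R * M⁻¹ * R)⁻¹ * B).trace = M.trace := by
    rw [mul_inv_rev, mul_inv_rev, nonsing_inv_nonsing_inv _ hMu,
      ← CFC.sqrt_mul_sqrt_self B hB.isStrictlyPositive.nonneg]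
    simp only [mul_assoc]
    rw [nonsing_inv_mul_cancel_left _ _ hRu, trace_mul_comm, mul_assoc, mul_nonsing_inv _ hRu,
      mul_one]
  rw [hKA, hKB, two_mul]

theorem PosSemidef.continuousOn_trace_sqrt_conj_add_smul_one {A B : Matrix ι ι ℝ}
    (hA : A.PosSemidef) (hB : B.PosSemidef) :
    ContinuousOn (fun t : ℝ => (CFC.sqrt (CFC.sqrt (B + t • 1) * (A + t • 1) *
      CFC.sqrt (B + t • 1))).trace) (Ici 0) := by
  have hshift : ∀ {C : Matrix ι ι ℝ}, C.PosSemidef → ∀ t ∈ Ici (0 : ℝ), 0 ≤ C + t • 1 :=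
    fun hC t ht => add_nonneg hC.nonneg (smul_nonneg ht zero_le_one)
  have hR : ContinuousOn (fun t : ℝ => CFC.sqrt (B + t • 1)) (Ici 0) :=
    CFC.continuousOn_sqrt.comp (by fun_prop) (hshift hB)
  refine continuous_id.matrix_trace.comp_continuousOn
    (CFC.continuousOn_sqrt.comp ((hR.mul (by fun_prop)).mul hR) fun t ht => ?_)
  exact (CFC.sqrt_nonneg _).isSelfAdjoint.conjugate_nonneg (hshift hA t ht)

theorem PosSemidef.le_trace_sqrt_of_forall_posDef {A B : Matrix ι ι ℝ} (hA : A.PosSemidef)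
    (hB : B.PosSemidef) {c : ℝ}
    (hc : ∀ K : Matrix ι ι ℝ, K.PosDef → 2 * c ≤ (K * A).trace + (K⁻¹ * B).trace) :
    c ≤ (CFC.sqrt (CFC.sqrt B * A * CFC.sqrt B)).trace := by
  have hpos : ∀ t > (0 : ℝ), c ≤ (CFC.sqrt (CFC.sqrt (B + t • 1) * (A + t • 1) *
      CFC.sqrt (B + t • 1))).trace := by
    intro t ht
    have hshift : ∀ {C : Matrix ι ι ℝ}, C.PosSemidef → (C + t • 1).PosDef := fun hC =>
      PosDef.posSemidef_add hC (PosDef.one.smul ht)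
    obtain ⟨K, hK, hKeq⟩ := (hshift hA).exists_trace_mul_add_trace_inv_mul_eq (hshift hB)
    have htr : ∀ {L C : Matrix ι ι ℝ}, L.PosDef → (L * C).trace ≤ (L * (C + t • 1)).trace := by
      intro L C hL
      rw [mul_add, trace_add, Matrix.mul_smul, mul_one, trace_smul, smul_eq_mul,
        le_add_iff_nonneg_right]
      exact mul_nonneg ht.le hL.posSemidef.trace_nonneg
    linarith [hc K hK, htr (C := A) hK, htr (C := B) hK.inv]
  have hlim := (hA.continuousOn_trace_sqrt_conj_add_smul_one hB 0 self_mem_Ici).mono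
    Ioi_subset_Ici_self
  simpa using ge_of_tendsto hlim (eventually_nhdsWithin_of_forall hpos)

end Matrix

theorem psdSqrt_eq_cfcSqrt {d : ℕ} {A : Matrix (Fin d) (Fin d) ℝ} (hA : A.PosSemidef) :
    psdSqrt A = CFC.sqrt A := by
  rw [CFC.sqrt_eq_cfc, cfc_nnreal_eq_real _ A hA.nonneg, hA.1.cfc_eq, psdSqrt, dif_pos hA,
    IsHermitian.cfc, Unitary.conjStarAlgAut_apply]
  congr 3
  funext i
  simp only [Function.comp_apply, RCLike.ofReal_real_eq_id, id_eq, Real.coe_sqrt,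
    Real.coe_toNNReal', max_eq_left (hA.eigenvalues_nonneg i)]

namespace MeasureTheory

section InnerProductSpace

variable {Ω E : Type*} [MeasurableSpace Ω] {π : Measure Ω} [NormedAddCommGroup E]

theorem MemLp.integrable_norm_sq {f : Ω → E} (hf : MemLp f 2 π) :
    Integrable (fun ω => ‖f ω‖ ^ 2) π :=
  (memLp_two_iff_integrable_sq_norm hf.1).mp hf

variable [InnerProductSpace ℝ E]

theorem MemLp.integrable_inner {f g : Ω → E} (hf : MemLp f 2 π) (hg : MemLp g 2 π) :
    Integrable (fun ω => ⟪f ω, g ω⟫) π :=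
  (hf.norm.integrable_mul hg.norm).mono (hf.1.inner hg.1) <| ae_of_all _ fun ω => by
    simpa using abs_real_inner_le_norm (f ω) (g ω)

theorem integral_norm_sub_sq {f g : Ω → E} (hf : MemLp f 2 π) (hg : MemLp g 2 π) :
    ∫ ω, ‖f ω - g ω‖ ^ 2 ∂π =
      ∫ ω, ‖f ω‖ ^ 2 ∂π - 2 * ∫ ω, ⟪f ω, g ω⟫ ∂π + ∫ ω, ‖g ω‖ ^ 2 ∂π := by
  have hcross : Integrable (fun ω => 2 * ⟪f ω, g ω⟫) π := (hf.integrable_inner hg).const_mul 2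
  have hdiff : Integrable (fun ω => ‖f ω‖ ^ 2 - 2 * ⟪f ω, g ω⟫) π :=
    hf.integrable_norm_sq.sub hcross
  simp_rw [norm_sub_sq_real]
  rw [integral_add hdiff hg.integrable_norm_sq, integral_sub hf.integrable_norm_sq hcross,
    integral_const_mul]

variable [CompleteSpace E] [IsProbabilityMeasure π]

theorem integral_norm_add_const_sq {f : Ω → E} (hf : MemLp f 2 π) (hf0 : ∫ ω, f ω ∂π = 0)
    (c : E) : ∫ ω, ‖f ω + c‖ ^ 2 ∂π = ∫ ω, ‖f ω‖ ^ 2 ∂π + ‖c‖ ^ 2 := by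
  have hint : Integrable f π := hf.integrable one_le_two
  have hcross : Integrable (fun ω => 2 * ⟪f ω, c⟫) π := (hint.inner_const c).const_mul 2
  have hsum : Integrable (fun ω => ‖f ω‖ ^ 2 + 2 * ⟪f ω, c⟫) π :=
    hf.integrable_norm_sq.add hcross
  have hcross0 : ∫ ω, ⟪f ω, c⟫ ∂π = 0 := by
    simpa [real_inner_comm, hf0] using integral_inner hint c
  simp_rw [norm_add_sq_real]
  rw [integral_add hsum (integrable_const _), integral_add hf.integrable_norm_sq hcross,
    integral_const_mul, hcross0]
  simp

theorem integral_norm_sub_sq_eq_norm_sub_integral_sq_add {f g : Ω → E} (hf : MemLp f 2 π)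
    (hg : MemLp g 2 π) :
    ∫ ω, ‖f ω - g ω‖ ^ 2 ∂π = ‖∫ ω, f ω ∂π - ∫ ω, g ω ∂π‖ ^ 2
      + ∫ ω, ‖f ω - ∫ ω, f ω ∂π‖ ^ 2 ∂π + ∫ ω, ‖g ω - ∫ ω, g ω ∂π‖ ^ 2 ∂π
      - 2 * ∫ ω, ⟪f ω - ∫ ω, f ω ∂π, g ω - ∫ ω, g ω ∂π⟫ ∂π := by
  set mf := ∫ ω, f ω ∂π
  set mg := ∫ ω, g ω ∂π
  have ha : MemLp (fun ω => f ω - mf) 2 π := hf.sub (memLp_const mf)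
  have hb : MemLp (fun ω => g ω - mg) 2 π := hg.sub (memLp_const mg)
  have hcentred : ∫ ω, (f ω - mf) - (g ω - mg) ∂π = 0 := by
    rw [integral_sub (ha.integrable one_le_two) (hb.integrable one_le_two),
      integral_sub (hf.integrable one_le_two) (integrable_const _),
      integral_sub (hg.integrable one_le_two) (integrable_const _)]
    simp [mf, mg]
  have hsplit : ∀ ω, f ω - g ω = ((f ω - mf) - (g ω - mg)) + (mf - mg) := fun ω => by abel
  simp_rw [hsplit]
  rw [integral_norm_add_const_sq (f := fun ω => (f ω - mf) - (g ω - mg)) (ha.sub hb) hcentred,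
    integral_norm_sub_sq ha hb]
  ring

end InnerProductSpace

section MomentMatrix

variable {Ω ι : Type*} [MeasurableSpace Ω] {π : Measure Ω} [Fintype ι]

noncomputable def momentMatrix (π : Measure Ω) (X Y : Ω → EuclideanSpace ℝ ι) :
    Matrix ι ι ℝ :=
  of fun i j => ∫ ω, X ω i * Y ω j ∂π

theorem MemLp.euclideanSpace_apply {p : ENNReal} {X : Ω → EuclideanSpace ℝ ι}
    (hX : MemLp X p π) (i : ι) : MemLp (fun ω => X ω i) p π :=
  (EuclideanSpace.proj i : EuclideanSpace ℝ ι →L[ℝ] ℝ).comp_memLp' hX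

theorem MemLp.integrable_apply_mul_apply {X Y : Ω → EuclideanSpace ℝ ι} (hX : MemLp X 2 π)
    (hY : MemLp Y 2 π) (i j : ι) : Integrable (fun ω => X ω i * Y ω j) π :=
  (hX.euclideanSpace_apply i).integrable_mul (hY.euclideanSpace_apply j)

theorem momentMatrix_self_posSemidef {X : Ω → EuclideanSpace ℝ ι} (hX : MemLp X 2 π) :
    (momentMatrix π X X).PosSemidef := by
  have hXi := hX.euclideanSpace_apply
  have hgram : momentMatrix π X X = gram ℝ fun i => (hXi i).toLp := by
    ext i j
    rw [gram_apply, L2.inner_def, momentMatrix, of_apply]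
    refine integral_congr_ae ?_
    filter_upwards [(hXi i).coeFn_toLp, (hXi j).coeFn_toLp] with ω hi hj
    simp [hi, hj, mul_comm]
  exact hgram ▸ posSemidef_gram ℝ _

theorem integrable_dotProduct_mulVec {X Y : Ω → EuclideanSpace ℝ ι} (hX : MemLp X 2 π)
    (hY : MemLp Y 2 π) (K : Matrix ι ι ℝ) :
    Integrable (fun ω => (X ω).ofLp ⬝ᵥ K *ᵥ (Y ω).ofLp) π := by
  simp_rw [dotProduct_mulVec_eq_sum]
  exact integrable_finsetSum _ fun i _ => integrable_finsetSum _ fun j _ =>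
    (hY.integrable_apply_mul_apply hX j i).const_mul _

theorem integral_dotProduct_mulVec {X Y : Ω → EuclideanSpace ℝ ι} (hX : MemLp X 2 π)
    (hY : MemLp Y 2 π) (K : Matrix ι ι ℝ) :
    ∫ ω, (X ω).ofLp ⬝ᵥ K *ᵥ (Y ω).ofLp ∂π = (K * momentMatrix π Y X).trace := by
  have hint := hY.integrable_apply_mul_apply hX
  simp_rw [dotProduct_mulVec_eq_sum]
  rw [integral_finsetSum (f := fun i ω => ∑ j, K i j * (Y ω j * X ω i)) _
    fun i _ => integrable_finsetSum _ fun j _ => (hint j i).const_mul _]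
  refine Finset.sum_congr rfl fun i _ => ?_
  rw [integral_finsetSum (f := fun j ω => K i j * (Y ω j * X ω i)) _
    fun j _ => (hint j i).const_mul _]
  simp_rw [integral_const_mul]
  rfl

theorem integral_norm_sq_eq_trace_momentMatrix [DecidableEq ι] {X : Ω → EuclideanSpace ℝ ι}
    (hX : MemLp X 2 π) :
    ∫ ω, ‖X ω‖ ^ 2 ∂π = (momentMatrix π X X).trace := by
  have hpt : ∀ ω, ‖X ω‖ ^ 2 = (X ω).ofLp ⬝ᵥ (1 : Matrix ι ι ℝ) *ᵥ (X ω).ofLp := fun ω => by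
    rw [← real_inner_self_eq_norm_sq, EuclideanSpace.inner_eq_star_dotProduct, star_trivial,
      one_mulVec]
  simp_rw [hpt]
  rw [integral_dotProduct_mulVec hX hX, one_mul]

theorem integral_inner_le_trace_sqrt_momentMatrix [DecidableEq ι]
    {X Y : Ω → EuclideanSpace ℝ ι} (hX : MemLp X 2 π) (hY : MemLp Y 2 π) :
    ∫ ω, ⟪X ω, Y ω⟫ ∂π ≤ (CFC.sqrt (CFC.sqrt (momentMatrix π Y Y) * momentMatrix π X X *
      CFC.sqrt (momentMatrix π Y Y))).trace := by
  refine (momentMatrix_self_posSemidef hX).le_trace_sqrt_of_forall_posDef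
    (momentMatrix_self_posSemidef hY) fun K hK => ?_
  have hpt : ∀ ω, 2 * ⟪X ω, Y ω⟫ ≤
      (X ω).ofLp ⬝ᵥ K *ᵥ (X ω).ofLp + (Y ω).ofLp ⬝ᵥ K⁻¹ *ᵥ (Y ω).ofLp := fun ω => by
    rw [EuclideanSpace.inner_eq_star_dotProduct, star_trivial, dotProduct_comm]
    exact hK.two_mul_dotProduct_le _ _
  calc 2 * ∫ ω, ⟪X ω, Y ω⟫ ∂π = ∫ ω, 2 * ⟪X ω, Y ω⟫ ∂π := (integral_const_mul _ _).symm
    _ ≤ ∫ ω, (X ω).ofLp ⬝ᵥ K *ᵥ (X ω).ofLp + (Y ω).ofLp ⬝ᵥ K⁻¹ *ᵥ (Y ω).ofLp ∂π :=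
      integral_mono ((hX.integrable_inner hY).const_mul 2)
        ((integrable_dotProduct_mulVec hX hX K).add (integrable_dotProduct_mulVec hY hY K⁻¹)) hpt
    _ = (K * momentMatrix π X X).trace + (K⁻¹ * momentMatrix π Y Y).trace := by
      rw [integral_add (integrable_dotProduct_mulVec hX hX K)
        (integrable_dotProduct_mulVec hY hY K⁻¹), integral_dotProduct_mulVec hX hX,
        integral_dotProduct_mulVec hY hY]

end MomentMatrix

end MeasureTheory

/-- **Gelbrich lower bound for the squared transport cost.**
For a probability measure `π` on `ℝ^d × ℝ^d` with square-integrable coordinates, means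
`μ, μ̃` and marginal covariance matrices `Σ, Σ̃`,
`∫ ‖x - y‖² dπ ≥ ‖μ - μ̃‖² + tr Σ + tr Σ̃ - 2 tr ((Σ̃^{1/2} Σ Σ̃^{1/2})^{1/2})`. -/
theorem integral_norm_sub_sq_ge_gelbrich
    {d : ℕ}
    (π : Measure (EuclideanSpace ℝ (Fin d) × EuclideanSpace ℝ (Fin d)))
    [IsProbabilityMeasure π]
    (h1 : MemLp (fun q => q.1) 2 π) (h2 : MemLp (fun q => q.2) 2 π)
    (μ μt : EuclideanSpace ℝ (Fin d))
    (hμ : μ = ∫ q, q.1 ∂π) (hμt : μt = ∫ q, q.2 ∂π)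
    (S St : Matrix (Fin d) (Fin d) ℝ)
    (hS : ∀ i j, S i j = ∫ q, (q.1 i - μ i) * (q.1 j - μ j) ∂π)
    (hSt : ∀ i j, St i j = ∫ q, (q.2 i - μt i) * (q.2 j - μt j) ∂π) :
    ∫ q, ‖q.1 - q.2‖ ^ 2 ∂π ≥
      ‖μ - μt‖ ^ 2 + S.trace + St.trace
        - 2 * (psdSqrt (psdSqrt St * S * psdSqrt St)).trace := by
  have hX : MemLp (fun q => q.1 - μ) 2 π := h1.sub (memLp_const μ)
  have hY : MemLp (fun q => q.2 - μt) 2 π := h2.sub (memLp_const μt)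
  have hSX : S = momentMatrix π (fun q => q.1 - μ) (fun q => q.1 - μ) := by
    ext i j
    exact hS i j
  have hStY : St = momentMatrix π (fun q => q.2 - μt) (fun q => q.2 - μt) := by
    ext i j
    exact hSt i j
  have hSpsd : S.PosSemidef := hSX ▸ momentMatrix_self_posSemidef hX
  have hStpsd : St.PosSemidef := hStY ▸ momentMatrix_self_posSemidef hY
  have hcross := integral_inner_le_trace_sqrt_momentMatrix hX hY
  rw [← hSX, ← hStY] at hcross
  rw [integral_norm_sub_sq_eq_norm_sub_integral_sq_add h1 h2, ← hμ, ← hμt,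
    integral_norm_sq_eq_trace_momentMatrix hX, integral_norm_sq_eq_trace_momentMatrix hY, ← hSX,
    ← hStY, psdSqrt_eq_cfcSqrt hStpsd, psdSqrt_eq_cfcSqrt (nonneg_iff_posSemidef.mp
      ((CFC.sqrt_nonneg St).isSelfAdjoint.conjugate_nonneg hSpsd.nonneg))]
  linarith
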